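/- arXiv:1710.10836 — 2 statements merged into one kernel-verified Lean document; each statement's English description precedes it below -/
import Mathlib

section
/- In the widest-path Dijkstra algorithm, when a vertex x is extracted from the priority queue, its dist value never changes afterwards, and vertices are extracted in non-increasing order of their final dist values. -/
/-!
Relaxing through a vertex `u` never lifts a value above `dist u`, and leaves unchanged every
value that is already at least `dist u`. By the greedy choice, every vertex still in the queue
after the `i`-th extraction has value at most `dist (L i)`; so the later relaxations leave
`dist (L i)` fixed, and every vertex extracted later is extracted with a value no larger.
-/

noncomputable section

/-- One extraction step of widest-path Dijkstra: after extracting `ver`,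
every vertex `n` is relaxed via `dist[n] := max (dist n) (min (dist ver) (w ver n))`,
where `w x y` is the largest weight among parallel edges from `x` to `y`
(`⊥` if there is no such edge). -/
def relaxAll {V : Type} (w : V → V → EReal) (d : V → EReal) (ver : V) : V → EReal :=
  fun n => max (d n) (min (d ver) (w ver n))

/-- Minimum edge weight along the path `x :: l` of vertices (`⊤` for the empty path). -/
def pathMin {V : Type} (w : V → V → EReal) : V → List V → EReal
  | _, [] => ⊤
  | x, y :: l => min (w x y) (pathMin w y l)

/-- Last vertex of the path `v :: l`. -/
def endV {V : Type} (v : V) (l : List V) : V := (v :: l).getLast (List.cons_ne_nil _ _)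

/-- Widest-path distance: the maximum (supremum) over all v-m paths of the
minimum edge weight along the path (equals `⊤` for `m = v`). -/
def widest {V : Type} (w : V → V → EReal) (v m : V) : EReal :=
  ⨆ (l : List V) (_ : endV v l = m), pathMin w v l

/-- `dists w d0 L i` : the dist table after the first `i` extractions,
where `L` is the order in which vertices are extracted. -/
def dists {V : Type} (w : V → V → EReal) (d0 : V → EReal) (L : List V) (i : ℕ) : V → EReal :=
  (L.take i).foldl (relaxAll w) d0

/-- The priority-queue (greedy) property of a run: the `i`-th extracted vertex has
maximal current dist value among all still-unextracted vertices. -/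
def GreedyRun {V : Type} (w : V → V → EReal) (d0 : V → EReal) (L : List V) : Prop :=
  ∀ i j : Fin L.length, i ≤ j →
    dists w d0 L i (L.get j) ≤ dists w d0 L i (L.get i)

section Relax

variable {V : Type} {w : V → V → EReal} {d : V → EReal} {ver n : V}

theorem relaxAll_of_le (h : d ver ≤ d n) : relaxAll w d ver n = d n :=
  max_eq_left (min_le_left _ _ |>.trans h)

theorem relaxAll_le {c : EReal} (hn : d n ≤ c) (hver : d ver ≤ c) : relaxAll w d ver n ≤ c :=
  max_le hn (min_le_left _ _ |>.trans hver)

end Relax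

section Run

variable {V : Type} {w : V → V → EReal} {d0 : V → EReal} {L : List V}

theorem dists_succ {k : ℕ} (hk : k < L.length) :
    dists w d0 L (k + 1) = relaxAll w (dists w d0 L k) (L.get ⟨k, hk⟩) := by
  rw [dists, dists, List.take_add_one, List.foldl_append, List.getElem?_eq_getElem hk]
  rfl

theorem GreedyRun.dists_unextracted_le (h : GreedyRun w d0 L) (i : Fin L.length) {k : ℕ}
    (hik : i ≤ k) : ∀ j : Fin L.length, k ≤ j →
      dists w d0 L k (L.get j) ≤ dists w d0 L i (L.get i) := by
  induction k, hik using Nat.le_induction with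
  | base => exact h i
  | succ k hik ih =>
    intro j hkj
    have hk : k < L.length := by omega
    rw [dists_succ hk]
    exact relaxAll_le (ih j (by omega)) (ih ⟨k, hk⟩ le_rfl)

theorem GreedyRun.dists_extracted_eq (h : GreedyRun w d0 L) (i : Fin L.length) {k : ℕ}
    (hik : i ≤ k) (hk : k ≤ L.length) :
    dists w d0 L k (L.get i) = dists w d0 L i (L.get i) := by
  induction k, hik using Nat.le_induction with
  | base => rfl
  | succ k hik ih =>
    have hk' : k < L.length := by omega
    have hextracted_le : dists w d0 L k (L.get ⟨k, hk'⟩) ≤ dists w d0 L k (L.get i) :=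
      (ih hk'.le).symm ▸ h.dists_unextracted_le i hik ⟨k, hk'⟩ le_rfl
    rw [dists_succ hk', relaxAll_of_le hextracted_le, ih hk'.le]

end Run

theorem stmt_10_general {V : Type}
    (w : V → V → EReal) (L : List V)
    (d0 : V → EReal)
    (hgreedy : GreedyRun w d0 L) :
    (∀ i j : Fin L.length, i ≤ j →
        dists w d0 L j (L.get i) = dists w d0 L i (L.get i)) ∧
    (∀ i j : Fin L.length, i ≤ j →
        dists w d0 L L.length (L.get j) ≤ dists w d0 L L.length (L.get i)) := by
  refine ⟨fun i j hij => hgreedy.dists_extracted_eq i hij j.isLt.le, fun i j hij => ?_⟩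
  calc dists w d0 L L.length (L.get j) = dists w d0 L j (L.get j) :=
        hgreedy.dists_extracted_eq j j.isLt.le le_rfl
    _ ≤ dists w d0 L i (L.get i) := hgreedy.dists_unextracted_le i hij j le_rfl
    _ = dists w d0 L L.length (L.get i) := (hgreedy.dists_extracted_eq i i.isLt.le le_rfl).symm

/-- in widest-path Dijkstra, once a vertex is extracted its dist
value never changes afterwards, and vertices are extracted in non-increasing
order of their final dist values. -/
theorem stmt_10 {V : Type} [Fintype V] [DecidableEq V]
    (w : V → V → EReal) (v : V) (L : List V)
    (hnodup : L.Nodup) (hall : ∀ x : V, x ∈ L)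
    (d0 : V → EReal) (hd0 : d0 = fun x => if x = v then ⊤ else ⊥)
    (hgreedy : GreedyRun w d0 L) :
    (∀ i j : Fin L.length, i ≤ j →
        dists w d0 L j (L.get i) = dists w d0 L i (L.get i)) ∧
    (∀ i j : Fin L.length, i ≤ j →
        dists w d0 L L.length (L.get j) ≤ dists w d0 L L.length (L.get i)) :=
  stmt_10_general w L d0 hgreedy
end
end

section
/- In the iterative cycle-enumeration process (find maxflow path P from v to u, record P ∪ {e}, delete all edges of weight ≥ M(P)), the recorded set S of cycles contains a cycle with minimum flow value among all cycles of the original graph G through e. Consequently, choosing the member of S with smallest flow value yields a cycle C through e minimizing φ(C) = M(C) − γ(C) over all cycles of G. -/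
/-!
Take any cycle `C`; it passes through `e`, lies in the initial graph and not in the final one, so
there is a first step `i` deleting one of its edges `f ≠ e`, i.e. `M(Pᵢ) ≤ w f ≤ M(C)`. Up to
that step `C` survives, and removing `e` from it leaves a `v`–`u` path inside the current graph,
whence `γ(C) ≤ γ(Pᵢ)` by maximality of `Pᵢ`. Hence `φ(Pᵢ ∪ {e}) ≤ φ(C)`, and the best recorded
cycle beats every cycle of `G`.
-/

/-- A directed multigraph: edges `E` with source and target vertices in `V`. -/
structure MultiDigraph (V : Type) (E : Type) where
  src : E → V
  tgt : E → V

namespace MultiDigraph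

variable {V E : Type}

/-- `G.IsWalk v u l` : the list of edges `l` forms a directed walk from `v` to `u`. -/
def IsWalk (G : MultiDigraph V E) : V → V → List E → Prop
  | v, u, [] => v = u
  | v, u, e :: l => G.src e = v ∧ G.IsWalk (G.tgt e) u l

/-- A (directed) cycle: a nonempty closed walk. -/
def IsCycle (G : MultiDigraph V E) (l : List E) : Prop :=
  l ≠ [] ∧ ∃ x, G.IsWalk x x l

/-- minimum edge weight (critical edge value γ) along a nonempty list of edges. -/
noncomputable def minW (w : E → ℝ) (l : List E) : ℝ := ((l.map w).min?).getD 0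

/-- maximum edge weight M along a nonempty list of edges. -/
noncomputable def maxW (w : E → ℝ) (l : List E) : ℝ := ((l.map w).max?).getD 0

/-- flow value φ = M − γ. -/
noncomputable def flowVal (w : E → ℝ) (l : List E) : ℝ := maxW w l - minW w l

end MultiDigraph

namespace MultiDigraph

variable {V E : Type}

/-- The edges of `l` all lie in the edge set `F`. -/
def EdgesIn (l : List E) (F : Finset E) : Prop := ∀ f ∈ l, f ∈ F

/-- `P` is a maxflow path from `v` to `u` using only edges of `F`. -/
def IsMaxflowPathIn (G : MultiDigraph V E) (w : E → ℝ) (v u : V) (F : Finset E)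
    (P : List E) : Prop :=
  G.IsWalk v u P ∧ P ≠ [] ∧ EdgesIn P F ∧
    ∀ Q, G.IsWalk v u Q → Q ≠ [] → EdgesIn Q F → minW w Q ≤ minW w P

/-- `ProcessRun G w e u v k Es Ps`: the iterative process of Algorithm 2.
Starting from the whole graph (`Es 0 = univ`), at each step `i < k` the list
`Ps i` is a maxflow path from `v` to `u` in the current edge set `Es i`, the
cycle `Ps i ++ [e]` is recorded, and every edge other than `e` of weight
`≥ M(Ps i)` is deleted to form `Es (i+1)`. -/
def ProcessRun [Fintype E] (G : MultiDigraph V E) (w : E → ℝ) (e : E) (u v : V)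
    (k : ℕ) (Es : ℕ → Finset E) (Ps : ℕ → List E) : Prop :=
  Es 0 = Finset.univ ∧
  ∀ i < k,
    G.IsMaxflowPathIn w v u (Es i) (Ps i) ∧
    ((Es (i+1) : Set E) = {f ∈ (Es i : Set E) | ¬ (maxW w (Ps i) ≤ w f ∧ f ≠ e)})

/-- There is a cycle all of whose edges lie in `F`. -/
def HasCycleIn (G : MultiDigraph V E) (F : Finset E) : Prop :=
  ∃ C, G.IsCycle C ∧ EdgesIn C F

end MultiDigraph

theorem Nat.exists_lt_and_not_succ {p : ℕ → Prop} (k : ℕ) (h0 : p 0) (hk : ¬ p k) :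
    ∃ i < k, p i ∧ ¬ p (i + 1) := by
  induction k with
  | zero => exact absurd h0 hk
  | succ n ih =>
    by_cases hn : p n
    · exact ⟨n, Nat.lt_succ_self n, hn, hk⟩
    · obtain ⟨i, hi, hpi, hpi'⟩ := ih hn
      exact ⟨i, hi.trans (Nat.lt_succ_self n), hpi, hpi'⟩

namespace MultiDigraph

variable {V E : Type}

section Weights

variable {w : E → ℝ} {l : List E} {f : E} {c : ℝ}

theorem maxW_le_iff (hl : l ≠ []) : maxW w l ≤ c ↔ ∀ f ∈ l, w f ≤ c := by
  have hm : l.map w ≠ [] := by simpa using hl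
  rw [maxW, List.max?_eq_some_max hm, Option.getD_some, List.max_le_iff, List.forall_mem_map]

theorem le_minW_iff (hl : l ≠ []) : c ≤ minW w l ↔ ∀ f ∈ l, c ≤ w f := by
  have hm : l.map w ≠ [] := by simpa using hl
  rw [minW, List.min?_eq_some_min hm, Option.getD_some, List.le_min_iff, List.forall_mem_map]

theorem le_maxW (hf : f ∈ l) : w f ≤ maxW w l :=
  (maxW_le_iff (List.ne_nil_of_mem hf)).1 le_rfl f hf

theorem minW_le (hf : f ∈ l) : minW w l ≤ w f :=
  (le_minW_iff (List.ne_nil_of_mem hf)).1 le_rfl f hf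

theorem flowVal_append_singleton_le {P C : List E} {e : E} (hP : P ≠ []) (he : e ∈ C)
    (hf : f ∈ C) (hmax : maxW w P ≤ w f) (hmin : minW w C ≤ minW w P) :
    flowVal w (P ++ [e]) ≤ flowVal w C := by
  have hM : maxW w (P ++ [e]) ≤ maxW w C := by
    refine (maxW_le_iff (by simp)).2 fun g hg => ?_
    rcases List.mem_append.1 hg with hg | hg
    · exact ((maxW_le_iff hP).1 le_rfl g hg).trans (hmax.trans (le_maxW hf))
    · exact List.mem_singleton.1 hg ▸ le_maxW he
  have hγ : minW w C ≤ minW w (P ++ [e]) := by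
    refine (le_minW_iff (by simp)).2 fun g hg => ?_
    rcases List.mem_append.1 hg with hg | hg
    · exact hmin.trans ((le_minW_iff hP).1 le_rfl g hg)
    · exact List.mem_singleton.1 hg ▸ minW_le he
  unfold flowVal
  linarith

end Weights

variable {G : MultiDigraph V E}

theorem isWalk_append {l₁ l₂ : List E} {v u : V} :
    G.IsWalk v u (l₁ ++ l₂) ↔ ∃ m, G.IsWalk v m l₁ ∧ G.IsWalk m u l₂ := by
  induction l₁ generalizing v with
  | nil => simp [IsWalk]
  | cons a l ih => simp only [List.cons_append, IsWalk, ih, and_assoc, exists_and_left]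

theorem IsWalk.exists_walk_tgt_src_of_mem {C : List E} {x : V} {e : E} (hC : G.IsWalk x x C)
    (he : e ∈ C) : ∃ Q, G.IsWalk (G.tgt e) (G.src e) Q ∧ ∀ f, f ∈ C ↔ f = e ∨ f ∈ Q := by
  obtain ⟨a, b, rfl⟩ := List.append_of_mem he
  obtain ⟨m, ha, hsrc, hb⟩ := isWalk_append.1 hC
  subst hsrc
  refine ⟨b ++ a, isWalk_append.2 ⟨x, hb, ha⟩, fun f => ?_⟩
  simp only [List.mem_append, List.mem_cons]
  tauto

theorem IsMaxflowPathIn.flowVal_append_le {w : E → ℝ} {e f : E} {F : Finset E} {P C : List E}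
    {x : V} (hP : G.IsMaxflowPathIn w (G.tgt e) (G.src e) F P) (hC : G.IsWalk x x C)
    (he : e ∈ C) (hCF : EdgesIn C F) (hf : f ∈ C) (hfe : f ≠ e) (hmax : maxW w P ≤ w f) :
    flowVal w (P ++ [e]) ≤ flowVal w C := by
  obtain ⟨-, hPne, -, hopt⟩ := hP
  obtain ⟨Q, hQ, hmemQ⟩ := hC.exists_walk_tgt_src_of_mem he
  have hQC : ∀ g ∈ Q, g ∈ C := fun g hg => (hmemQ g).2 (Or.inr hg)
  have hQne : Q ≠ [] := List.ne_nil_of_mem (((hmemQ f).1 hf).resolve_left hfe)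
  have hmin : minW w C ≤ minW w P :=
    calc minW w C ≤ minW w Q := (le_minW_iff hQne).2 fun g hg => minW_le (hQC g hg)
      _ ≤ minW w P := hopt Q hQ hQne fun g hg => hCF g (hQC g hg)
  exact flowVal_append_singleton_le hPne he hf hmax hmin

theorem ProcessRun.exists_flowVal_le [Fintype E] {w : E → ℝ} {e : E} {k : ℕ}
    {Es : ℕ → Finset E} {Ps : ℕ → List E} (hrun : G.ProcessRun w e (G.src e) (G.tgt e) k Es Ps)
    (hall : ∀ l, G.IsCycle l → e ∈ l) (hterm : ¬ G.HasCycleIn (Es k)) {C : List E}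
    (hC : G.IsCycle C) : ∃ i < k, flowVal w (Ps i ++ [e]) ≤ flowVal w C := by
  obtain ⟨h0, hstep⟩ := hrun
  obtain ⟨i, hik, hCi, hCi'⟩ := Nat.exists_lt_and_not_succ (p := fun i => EdgesIn C (Es i)) k
    (fun f _ => h0 ▸ Finset.mem_univ f) (fun h => hterm ⟨C, hC, h⟩)
  obtain ⟨hP, hEs⟩ := hstep i hik
  obtain ⟨f, hf, hfi⟩ : ∃ f ∈ C, f ∉ Es (i + 1) := by
    simpa only [EdgesIn, not_forall, exists_prop] using hCi'
  have hdel : maxW w (Ps i) ≤ w f ∧ f ≠ e := by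
    by_contra h
    exact hfi (by rw [← Finset.mem_coe, hEs]; exact ⟨hCi f hf, h⟩)
  obtain ⟨x, hx⟩ := hC.2
  exact ⟨i, hik, hP.flowVal_append_le hx (hall C hC) hCi hf hdel.2 hdel.1⟩

end MultiDigraph

open MultiDigraph in
theorem stmt_12_general {V E : Type} [Fintype E]
    (G : MultiDigraph V E) (w : E → ℝ) (e : E) (u v : V)
    (hsrc : G.src e = u) (htgt : G.tgt e = v)
    (hall : ∀ l, G.IsCycle l → e ∈ l)
    (k : ℕ) (Es : ℕ → Finset E) (Ps : ℕ → List E)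
    (hrun : G.ProcessRun w e u v k Es Ps)
    (hterm : ¬ G.HasCycleIn (Es k))
    (hcyc : ∃ C, G.IsCycle C) :
    ∃ i < k, ∀ C', G.IsCycle C' →
      flowVal w (Ps i ++ [e]) ≤ flowVal w C' := by
  subst hsrc htgt
  obtain ⟨C, hC⟩ := hcyc
  obtain ⟨j, hjk, -⟩ := hrun.exists_flowVal_le hall hterm hC
  obtain ⟨i, hi, hbest⟩ := (Finset.range k).exists_min_image (fun i => flowVal w (Ps i ++ [e]))
    ⟨j, Finset.mem_range.2 hjk⟩
  refine ⟨i, Finset.mem_range.1 hi, fun C' hC' => ?_⟩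
  obtain ⟨j', hj'k, hj'C'⟩ := hrun.exists_flowVal_le hall hterm hC'
  exact (hbest j' (Finset.mem_range.2 hj'k)).trans hj'C'

open MultiDigraph in
/-- when the iterative process terminates (no cycle remains), the
recorded set of cycles `Ps i ++ [e]` contains one of minimum flow value among
all cycles of the original graph G (all of which pass through e). -/
theorem stmt_12 {V E : Type} [Fintype E] [DecidableEq E]
    (G : MultiDigraph V E) (w : E → ℝ) (e : E) (u v : V)
    (hsrc : G.src e = u) (htgt : G.tgt e = v)
    (hall : ∀ l, G.IsCycle l → e ∈ l)
    (k : ℕ) (Es : ℕ → Finset E) (Ps : ℕ → List E)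
    (hrun : G.ProcessRun w e u v k Es Ps)
    (hterm : ¬ G.HasCycleIn (Es k))
    (hcyc : ∃ C, G.IsCycle C) :
    ∃ i < k, ∀ C', G.IsCycle C' →
      flowVal w (Ps i ++ [e]) ≤ flowVal w C' :=
  stmt_12_general G w e u v hsrc htgt hall k Es Ps hrun hterm hcyc
end
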